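/- If (X,Y) has the nuclear tensorization property and X' ⊂ X, Y' ⊂ Y are 1-complemented subspaces, then (X',Y') has the nuclear tensorization property. -/

import Mathlib

open scoped TensorProduct BigOperators
open Filter MeasureTheory

noncomputable section

variable {X Y : Type*} [NormedAddCommGroup X] [NormedSpace ℝ X]
  [NormedAddCommGroup Y] [NormedSpace ℝ Y]

/-- The functional `λ₁ ⊗ ⋯ ⊗ λ_k` on the `k`-fold tensor power. -/
def dualTensor (k : ℕ) (f : Fin k → (X →L[ℝ] ℝ)) :
    (⨂[ℝ] _ : Fin k, X) →ₗ[ℝ] ℝ :=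
  PiTensorProduct.lift ((MultilinearMap.mkPiAlgebra ℝ (Fin k) ℝ).compLinearMap
    (fun i => (f i).toLinearMap))

/-- Injective tensor norm on the `k`-fold tensor power. -/
def injNorm (k : ℕ) (z : ⨂[ℝ] _ : Fin k, X) : ℝ :=
  sSup { r | ∃ f : Fin k → (X →L[ℝ] ℝ), (∀ i, ‖f i‖ ≤ 1) ∧ r = |dualTensor k f z| }

/-- Projective tensor norm on the `k`-fold tensor power. -/
def projNorm (k : ℕ) (z : ⨂[ℝ] _ : Fin k, Y) : ℝ :=
  sInf { r | ∃ (n : ℕ) (x : Fin n → Fin k → Y),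
    z = ∑ j, PiTensorProduct.tprod ℝ (x j) ∧ r = ∑ j, ∏ i, ‖x j i‖ }

/-- The `k`-th tensor power of an operator. -/
def tensorPow (k : ℕ) (T : X →L[ℝ] Y) :
    (⨂[ℝ] _ : Fin k, X) →ₗ[ℝ] (⨂[ℝ] _ : Fin k, Y) :=
  PiTensorProduct.map (fun _ => T.toLinearMap)

/-- `τ_k(T) = ‖T^{⊗k}‖_{ε_k(X)→π_k(Y)}^{1/k}`. -/
def tau (k : ℕ) (T : X →L[ℝ] Y) : ℝ :=
  (sSup { r | ∃ z : ⨂[ℝ] _ : Fin k, X, injNorm k z ≤ 1 ∧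
      r = projNorm k (tensorPow k T z) }) ^ ((k : ℝ)⁻¹)

/-- `τ_∞(T) = lim_k τ_k(T) = sup_{k ≥ 1} τ_k(T)`. -/
def tauInf (T : X →L[ℝ] Y) : ℝ :=
  sSup { r | ∃ k : ℕ, 1 ≤ k ∧ r = tau k T }

/-- `ρ_k(X)`. -/
def rho (k : ℕ) (X : Type*) [NormedAddCommGroup X] [NormedSpace ℝ X] : ℝ :=
  tau k (ContinuousLinearMap.id ℝ X)

/-- `ρ_∞(X)`. -/
def rhoInf (X : Type*) [NormedAddCommGroup X] [NormedSpace ℝ X] : ℝ :=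
  tauInf (ContinuousLinearMap.id ℝ X)

/-- Nuclear norm. -/
def nuclearNorm (T : X →L[ℝ] Y) : ℝ :=
  sInf { r | ∃ (n : ℕ) (g : Fin n → (X →L[ℝ] ℝ)) (y : Fin n → Y),
    (∀ v, T v = ∑ j, g j v • y j) ∧ r = ∑ j, ‖g j‖ * ‖y j‖ }

/-- Banach–Mazur distance. -/
def BMdist (X Y : Type*) [NormedAddCommGroup X] [NormedSpace ℝ X]
    [NormedAddCommGroup Y] [NormedSpace ℝ Y] : ℝ :=
  sInf { r | ∃ e : X ≃L[ℝ] Y, r = ‖(e : X →L[ℝ] Y)‖ * ‖(e.symm : Y →L[ℝ] X)‖ }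

/-- Nuclear tensorization property. -/
def NTP (X Y : Type*) [NormedAddCommGroup X] [NormedSpace ℝ X]
    [NormedAddCommGroup Y] [NormedSpace ℝ Y] : Prop :=
  ∀ T : X →L[ℝ] Y, tauInf T = nuclearNorm T

/-! ### Auxiliary lemmas -/

section Aux

open PiTensorProduct

variable {Z : Type*} [NormedAddCommGroup Z] [NormedSpace ℝ Z]

lemma dualTensor_tprod (k : ℕ) (f : Fin k → (X →L[ℝ] ℝ)) (x : Fin k → X) :
    dualTensor k f (tprod ℝ x) = ∏ i, f i (x i) := by
  simp [dualTensor]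

lemma exists_rep {k : ℕ} (hk : 1 ≤ k) (z : ⨂[ℝ] _ : Fin k, X) :
    ∃ (n : ℕ) (x : Fin n → Fin k → X), z = ∑ j, tprod ℝ (x j) := by
  induction z using PiTensorProduct.induction_on with
  | smul_tprod r f =>
      refine ⟨1, fun _ => Function.update f ⟨0, hk⟩ (r • f ⟨0, hk⟩), ?_⟩
      rw [Fin.sum_univ_one]
      show _ = tprod ℝ (Function.update f ⟨0, hk⟩ (r • f ⟨0, hk⟩))
      simp [MultilinearMap.map_update_smul, Function.update_eq_self]
  | add a b ha hb =>
      obtain ⟨n, x, hx⟩ := ha; obtain ⟨m, y, hy⟩ := hb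
      refine ⟨n + m, Fin.append x y, ?_⟩
      rw [Fin.sum_univ_add]
      simp [hx, hy]

lemma abs_dualTensor_le {k n : ℕ} (f : Fin k → (X →L[ℝ] ℝ)) (hf : ∀ i, ‖f i‖ ≤ 1)
    (x : Fin n → Fin k → X) :
    |dualTensor k f (∑ j, tprod ℝ (x j))| ≤ ∑ j, ∏ i, ‖x j i‖ := by
  rw [map_sum]
  refine (Finset.abs_sum_le_sum_abs _ _).trans (Finset.sum_le_sum fun j _ => ?_)
  rw [dualTensor_tprod, Finset.abs_prod]
  refine Finset.prod_le_prod (fun i _ => abs_nonneg _) fun i _ => ?_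
  calc |f i (x j i)| = ‖f i (x j i)‖ := (Real.norm_eq_abs _).symm
    _ ≤ ‖f i‖ * ‖x j i‖ := (f i).le_opNorm _
    _ ≤ 1 * ‖x j i‖ := by gcongr; exact hf i
    _ = ‖x j i‖ := one_mul _

lemma bddAbove_injSet {k : ℕ} (hk : 1 ≤ k) (z : ⨂[ℝ] _ : Fin k, X) :
    BddAbove { r | ∃ f : Fin k → (X →L[ℝ] ℝ), (∀ i, ‖f i‖ ≤ 1) ∧ r = |dualTensor k f z| } := by
  obtain ⟨n, x, rfl⟩ := exists_rep hk z
  exact ⟨∑ j, ∏ i, ‖x j i‖, fun r ⟨f, hf, hr⟩ => hr ▸ abs_dualTensor_le f hf x⟩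

lemma injNorm_nonneg (k : ℕ) (z : ⨂[ℝ] _ : Fin k, X) : 0 ≤ injNorm k z :=
  Real.sSup_nonneg (fun r ⟨_, _, hr⟩ => hr ▸ abs_nonneg _)

lemma abs_dualTensor_le_injNorm {k : ℕ} (hk : 1 ≤ k) {f : Fin k → (X →L[ℝ] ℝ)}
    (hf : ∀ i, ‖f i‖ ≤ 1) (z : ⨂[ℝ] _ : Fin k, X) :
    |dualTensor k f z| ≤ injNorm k z :=
  le_csSup (bddAbove_injSet hk z) ⟨f, hf, rfl⟩

lemma dualTensor_map {k : ℕ} (f : Fin k → (Y →L[ℝ] ℝ)) (A : X →L[ℝ] Y)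
    (z : ⨂[ℝ] _ : Fin k, X) :
    dualTensor k f (PiTensorProduct.map (fun _ => A.toLinearMap) z)
      = dualTensor k (fun i => (f i).comp A) z := by
  have : (dualTensor k f).comp (PiTensorProduct.map (fun _ => A.toLinearMap))
      = dualTensor k (fun i => (f i).comp A) := by
    ext x
    simp [dualTensor]
  exact LinearMap.congr_fun this z

lemma injNorm_map_le {k : ℕ} (hk : 1 ≤ k) (A : X →L[ℝ] Y) (hA : ‖A‖ ≤ 1)
    (z : ⨂[ℝ] _ : Fin k, X) :
    injNorm k (PiTensorProduct.map (fun _ => A.toLinearMap) z) ≤ injNorm k z := by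
  refine Real.sSup_le ?_ (injNorm_nonneg k z)
  rintro r ⟨f, hf, rfl⟩
  rw [dualTensor_map]
  refine abs_dualTensor_le_injNorm hk (fun i => ?_) z
  calc ‖(f i).comp A‖ ≤ ‖f i‖ * ‖A‖ := (f i).opNorm_comp_le A
    _ ≤ 1 * 1 := mul_le_mul (hf i) hA (norm_nonneg _) zero_le_one
    _ = 1 := one_mul 1

lemma projSet_bddBelow (k : ℕ) (w : ⨂[ℝ] _ : Fin k, Y) :
    BddBelow { r | ∃ (n : ℕ) (x : Fin n → Fin k → Y),
      w = ∑ j, tprod ℝ (x j) ∧ r = ∑ j, ∏ i, ‖x j i‖ } :=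
  ⟨0, fun r ⟨_, x, _, hr⟩ => hr ▸ Finset.sum_nonneg
    (fun j _ => Finset.prod_nonneg fun i _ => norm_nonneg _)⟩

lemma projSet_nonempty {k : ℕ} (hk : 1 ≤ k) (w : ⨂[ℝ] _ : Fin k, Y) :
    Set.Nonempty { r | ∃ (n : ℕ) (x : Fin n → Fin k → Y),
      w = ∑ j, tprod ℝ (x j) ∧ r = ∑ j, ∏ i, ‖x j i‖ } := by
  obtain ⟨n, x, hx⟩ := exists_rep hk w
  exact ⟨∑ j, ∏ i, ‖x j i‖, n, x, hx, rfl⟩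

lemma projNorm_map_le {k : ℕ} (hk : 1 ≤ k) (A : Y →L[ℝ] Z) (hA : ∀ y, ‖A y‖ ≤ ‖y‖)
    (w : ⨂[ℝ] _ : Fin k, Y) :
    projNorm k (PiTensorProduct.map (fun _ => A.toLinearMap) w) ≤ projNorm k w := by
  refine le_csInf (projSet_nonempty hk w) ?_
  rintro r ⟨n, x, hw, rfl⟩
  have hmem : projNorm k (PiTensorProduct.map (fun _ => A.toLinearMap) w)
      ≤ ∑ j, ∏ i, ‖A (x j i)‖ := by
    refine csInf_le (projSet_bddBelow k _) ⟨n, fun j i => A (x j i), ?_, rfl⟩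
    rw [hw, map_sum]
    simp [PiTensorProduct.map_tprod]
  refine hmem.trans (Finset.sum_le_sum fun j _ => ?_)
  exact Finset.prod_le_prod (fun i _ => norm_nonneg _) fun i _ => hA (x j i)

lemma tensor_map_map (A : Y →L[ℝ] Z) (B : X →L[ℝ] Y) {k : ℕ} (z : ⨂[ℝ] _ : Fin k, X) :
    PiTensorProduct.map (fun _ => A.toLinearMap)
        (PiTensorProduct.map (fun _ => B.toLinearMap) z)
      = PiTensorProduct.map (fun _ => (A.comp B).toLinearMap) z := by
  rw [← LinearMap.comp_apply, ← PiTensorProduct.map_comp]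
  rfl

end Aux

section Complemented

open PiTensorProduct

variable [FiniteDimensional ℝ X] [FiniteDimensional ℝ Y]
  (X' : Submodule ℝ X) (Y' : Submodule ℝ Y)

lemma nuclearSet_nonempty {W : Type*} [NormedAddCommGroup W] [NormedSpace ℝ W]
    [FiniteDimensional ℝ W] (T : W →L[ℝ] Y) :
    Set.Nonempty { r | ∃ (n : ℕ) (g : Fin n → (W →L[ℝ] ℝ)) (y : Fin n → Y),
      (∀ v, T v = ∑ j, g j v • y j) ∧ r = ∑ j, ‖g j‖ * ‖y j‖ } := by
  classical
  let b := Module.finBasis ℝ W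
  refine ⟨_, _, fun j => LinearMap.toContinuousLinearMap (b.coord j),
    fun j => T (b j), fun v => ?_, rfl⟩
  conv_lhs => rw [← b.sum_repr v]
  rw [map_sum]
  simp [Module.Basis.coord]

lemma nuclearSet_bddBelow {W : Type*} [NormedAddCommGroup W] [NormedSpace ℝ W]
    (T : W →L[ℝ] Y) :
    BddBelow { r | ∃ (n : ℕ) (g : Fin n → (W →L[ℝ] ℝ)) (y : Fin n → Y),
      (∀ v, T v = ∑ j, g j v • y j) ∧ r = ∑ j, ‖g j‖ * ‖y j‖ } :=
  ⟨0, fun r ⟨_, g, y, _, hr⟩ => hr ▸ Finset.sum_nonneg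
    (fun j _ => mul_nonneg (norm_nonneg _) (norm_nonneg _))⟩

end Complemented

theorem NTP_of_one_complemented [FiniteDimensional ℝ X] [FiniteDimensional ℝ Y]
    (X' : Submodule ℝ X) (Y' : Submodule ℝ Y)
    (P₁ : X →L[ℝ] X') (hP₁ : ∀ v : X', P₁ (v : X) = v) (hP₁n : ‖P₁‖ = 1)
    (P₂ : Y →L[ℝ] Y') (hP₂ : ∀ v : Y', P₂ (v : Y) = v) (hP₂n : ‖P₂‖ = 1)
    (h : NTP X Y) : NTP X' Y' := by
  classical
  intro T
  set ι₁ : X' →L[ℝ] X := X'.subtypeL with hι₁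
  set ι₂ : Y' →L[ℝ] Y := Y'.subtypeL with hι₂
  have hι₁n : ‖ι₁‖ ≤ 1 := by
    refine ContinuousLinearMap.opNorm_le_bound _ zero_le_one fun x => ?_
    rw [one_mul]; rfl
  have hι₂iso : ∀ y : Y', ‖ι₂ y‖ = ‖y‖ := fun y => rfl
  have hP₂le : ∀ y : Y, ‖P₂ y‖ ≤ ‖y‖ := fun y => by
    calc ‖P₂ y‖ ≤ ‖P₂‖ * ‖y‖ := P₂.le_opNorm y
      _ = ‖y‖ := by rw [hP₂n, one_mul]
  have hP₁comp : P₁.comp ι₁ = ContinuousLinearMap.id ℝ X' :=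
    ContinuousLinearMap.ext fun v => hP₁ v
  have hP₂comp : P₂.comp ι₂ = ContinuousLinearMap.id ℝ Y' :=
    ContinuousLinearMap.ext fun v => hP₂ v
  set S : X →L[ℝ] Y := ι₂.comp (T.comp P₁) with hS
  have hScomp : S.comp ι₁ = ι₂.comp T :=
    ContinuousLinearMap.ext fun v => congrArg (fun w => ι₂ (T w)) (hP₁ v)
  have hmapP₁ι₁ : ∀ {k : ℕ} (z : ⨂[ℝ] _ : Fin k, X'),
      PiTensorProduct.map (fun _ => P₁.toLinearMap)
        (PiTensorProduct.map (fun _ => ι₁.toLinearMap) z) = z := by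
    intro k z
    rw [tensor_map_map, hP₁comp]
    exact LinearMap.congr_fun (PiTensorProduct.map_id (s := fun _ : Fin k => X')) z
  have hmapP₂ι₂ : ∀ {k : ℕ} (w : ⨂[ℝ] _ : Fin k, Y'),
      PiTensorProduct.map (fun _ => P₂.toLinearMap)
        (PiTensorProduct.map (fun _ => ι₂.toLinearMap) w) = w := by
    intro k w
    rw [tensor_map_map, hP₂comp]
    exact LinearMap.congr_fun (PiTensorProduct.map_id (s := fun _ : Fin k => Y')) w
  have hinj : ∀ {k : ℕ}, 1 ≤ k → ∀ z : ⨂[ℝ] _ : Fin k, X',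
      injNorm k (PiTensorProduct.map (fun _ => ι₁.toLinearMap) z) = injNorm k z := by
    intro k hk z
    refine le_antisymm (injNorm_map_le hk ι₁ hι₁n z) ?_
    conv_lhs => rw [← hmapP₁ι₁ z]
    exact injNorm_map_le hk P₁ (le_of_eq hP₁n) _
  have hproj : ∀ {k : ℕ}, 1 ≤ k → ∀ w : ⨂[ℝ] _ : Fin k, Y',
      projNorm k (PiTensorProduct.map (fun _ => ι₂.toLinearMap) w) = projNorm k w := by
    intro k hk w
    refine le_antisymm (projNorm_map_le hk ι₂ (fun y => le_of_eq (hι₂iso y)) w) ?_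
    conv_lhs => rw [← hmapP₂ι₂ w]
    exact projNorm_map_le hk P₂ hP₂le _
  -- tensor power of S via T
  have hpow₁ : ∀ {k : ℕ} (z : ⨂[ℝ] _ : Fin k, X'),
      tensorPow k S (PiTensorProduct.map (fun _ => ι₁.toLinearMap) z)
        = PiTensorProduct.map (fun _ => ι₂.toLinearMap) (tensorPow k T z) := by
    intro k z
    show PiTensorProduct.map (fun _ => S.toLinearMap)
        (PiTensorProduct.map (fun _ => ι₁.toLinearMap) z) = _
    rw [tensor_map_map S ι₁ z, hScomp, ← tensor_map_map ι₂ T z]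
    rfl
  have hpow₂ : ∀ {k : ℕ} (z : ⨂[ℝ] _ : Fin k, X),
      tensorPow k S z = PiTensorProduct.map (fun _ => ι₂.toLinearMap)
        (tensorPow k T (PiTensorProduct.map (fun _ => P₁.toLinearMap) z)) := by
    intro k z
    show PiTensorProduct.map (fun _ => (ι₂.comp (T.comp P₁)).toLinearMap) z = _
    rw [← tensor_map_map ι₂ (T.comp P₁) z, ← tensor_map_map T P₁ z]
    rfl
  have htau : ∀ {k : ℕ}, 1 ≤ k → tau k T = tau k S := by
    intro k hk
    unfold tau
    refine congrArg (fun s => sSup s ^ ((k : ℝ)⁻¹)) ?_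
    ext r
    constructor
    · rintro ⟨z, hz, rfl⟩
      refine ⟨PiTensorProduct.map (fun _ => ι₁.toLinearMap) z, ?_, ?_⟩
      · rw [hinj hk]; exact hz
      · rw [hpow₁ z, hproj hk]
    · rintro ⟨z, hz, rfl⟩
      refine ⟨PiTensorProduct.map (fun _ => P₁.toLinearMap) z, ?_, ?_⟩
      · exact le_trans (injNorm_map_le hk P₁ (le_of_eq hP₁n) z) hz
      · rw [hpow₂ z, hproj hk]
  have htauInf : tauInf T = tauInf S := by
    unfold tauInf
    refine congrArg sSup ?_
    ext r
    exact ⟨fun ⟨k, hk, hr⟩ => ⟨k, hk, hr.trans (htau hk)⟩,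
      fun ⟨k, hk, hr⟩ => ⟨k, hk, hr.trans (htau hk).symm⟩⟩
  have hnuc : nuclearNorm T = nuclearNorm S := by
    refine le_antisymm ?_ ?_
    · refine le_csInf (nuclearSet_nonempty S) ?_
      rintro r ⟨n, g, y, hrep, rfl⟩
      have hmem : nuclearNorm T ≤ ∑ j, ‖(g j).comp ι₁‖ * ‖P₂ (y j)‖ := by
        refine csInf_le (nuclearSet_bddBelow T) ⟨n, fun j => (g j).comp ι₁,
          fun j => P₂ (y j), fun v => ?_, rfl⟩
        have h1 : T v = P₂ (S (ι₁ v)) := by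
          have h2 : S (ι₁ v) = ι₂ (T v) := DFunLike.congr_fun hScomp v
          rw [h2]
          exact (hP₂ (T v)).symm
        rw [h1, hrep (ι₁ v), map_sum]
        simp
      refine hmem.trans (Finset.sum_le_sum fun j _ => ?_)
      refine mul_le_mul ?_ (hP₂le (y j)) (norm_nonneg _) (norm_nonneg _)
      calc ‖(g j).comp ι₁‖ ≤ ‖g j‖ * ‖ι₁‖ := (g j).opNorm_comp_le ι₁
        _ ≤ ‖g j‖ * 1 := by gcongr
        _ = ‖g j‖ := mul_one _
    · refine le_csInf (nuclearSet_nonempty T) ?_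
      rintro r ⟨n, g, y, hrep, rfl⟩
      have hmem : nuclearNorm S ≤ ∑ j, ‖(g j).comp P₁‖ * ‖ι₂ (y j)‖ := by
        refine csInf_le (nuclearSet_bddBelow S) ⟨n, fun j => (g j).comp P₁,
          fun j => ι₂ (y j), fun v => ?_, rfl⟩
        have h1 : S v = ι₂ (T (P₁ v)) := rfl
        rw [h1, hrep (P₁ v), map_sum]
        simp
      refine hmem.trans (Finset.sum_le_sum fun j _ => ?_)
      rw [hι₂iso (y j)]
      refine mul_le_mul ?_ le_rfl (norm_nonneg _) (norm_nonneg _)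
      calc ‖(g j).comp P₁‖ ≤ ‖g j‖ * ‖P₁‖ := (g j).opNorm_comp_le P₁
        _ = ‖g j‖ := by rw [hP₁n, mul_one]
  rw [htauInf, h S, hnuc]
end
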